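/- arXiv:2310.17368 — 2 statements merged into one kernel-verified Lean document; each statement's English description precedes it below -/
import Mathlib

section
/- The dynamic programming recursion u_{jγ} = max(u_{iγ} + d̄_j, u_{i(γ−1)} + d̄_j + d̂_j) with u_{j0} = u_{i0} + d̄_j along a route correctly computes the worst-case cumulative load: u_{i_k, γ} equals the maximum over all subsets T ⊆ {i_1,...,i_k} with |T| ≤ γ of Σ_{l=1}^k d̄_{i_l} + Σ_{i∈T} d̂_i. -/
open Finset

lemma map_preimage_castSucc {k : ℕ} (T : Finset (Fin (k+1))) (hT : Fin.last k ∉ T) :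
    (T.preimage Fin.castSucc (Fin.castSucc_injective k).injOn).map
      Fin.castSuccEmb = T := by
  ext a
  simp only [Finset.mem_map, Finset.mem_preimage, Fin.castSuccEmb, Function.Embedding.coeFn_mk]
  constructor
  · rintro ⟨b, hb, rfl⟩; exact hb
  · intro ha
    have hne : a ≠ Fin.last k := fun h => hT (h ▸ ha)
    exact ⟨a.castPred hne, by rwa [Fin.castSucc_castPred], Fin.castSucc_castPred _ _⟩

/-- `b k` and `h k` are the base demand and deviation of the customer visited at
position `k+1` of the route; `u k γ` is the DP value after serving the first `k`
customers with at most `γ` deviated customers. -/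
theorem robust_dp_correct (b h : ℕ → ℝ) (hb : ∀ k, 0 ≤ b k) (hh : ∀ k, 0 ≤ h k)
    (u : ℕ → ℕ → ℝ)
    (h0 : ∀ γ, u 0 γ = 0)
    (hrec0 : ∀ k, u (k + 1) 0 = u k 0 + b k)
    (hrec : ∀ k γ, u (k + 1) (γ + 1) =
      max (u k (γ + 1) + b k) (u k γ + b k + h k)) :
    ∀ k γ, IsGreatest
      {x : ℝ | ∃ T : Finset (Fin k), T.card ≤ γ ∧
        x = (∑ l : Fin k, b l) + ∑ l ∈ T, h (l : ℕ)}
      (u k γ) := by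
  intro k
  induction k with
  | zero =>
    intro γ
    constructor
    · exact ⟨∅, by simp, by simp [h0]⟩
    · rintro x ⟨T, hTc, rfl⟩
      have hTe : T = ∅ := Finset.eq_empty_of_isEmpty T
      simp [hTe, h0]
  | succ k ih =>
    intro γ
    have hbsum : (∑ l : Fin (k+1), b l) = (∑ l : Fin k, b l) + b k := by
      rw [Fin.sum_univ_castSucc]; simp
    cases γ with
    | zero =>
      obtain ⟨⟨T₀, hT₀c, hT₀⟩, hub⟩ := ih 0
      have hT₀e : T₀ = ∅ := Finset.card_eq_zero.mp (Nat.le_zero.mp hT₀c)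
      have hu0 : u k 0 = ∑ l : Fin k, b l := by
        rw [hT₀]; simp [hT₀e]
      constructor
      · refine ⟨∅, le_rfl, ?_⟩
        rw [hrec0, hbsum, hu0]
        simp
      · rintro x ⟨T, hTc, rfl⟩
        have hTe : T = ∅ := Finset.card_eq_zero.mp (Nat.le_zero.mp hTc)
        subst hTe
        rw [hrec0, hbsum, hu0]
        simp
    | succ γ =>
      obtain ⟨⟨T₁, hT₁c, hT₁⟩, hub₁⟩ := ih (γ+1)
      obtain ⟨⟨T₂, hT₂c, hT₂⟩, hub₂⟩ := ih γ
      have hlast_notmem : ∀ S : Finset (Fin k),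
          Fin.last k ∉ S.map Fin.castSuccEmb := by
        intro S hmem
        obtain ⟨x, -, heq⟩ := Finset.mem_map.mp hmem
        exact (Fin.castSucc_lt_last x).ne heq
      have hsum_map : ∀ (S : Finset (Fin k)),
          ∑ l ∈ S.map Fin.castSuccEmb, h (l : ℕ) = ∑ l ∈ S, h (l : ℕ) := by
        intro S
        rw [Finset.sum_map]
        simp [Fin.castSuccEmb]
      constructor
      · rw [hrec]
        rcases max_cases (u k (γ+1) + b k) (u k γ + b k + h k) with ⟨heq, _⟩ | ⟨heq, _⟩
        · refine ⟨T₁.map Fin.castSuccEmb, by simpa using hT₁c, ?_⟩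
          rw [heq, hT₁, hbsum, hsum_map]
          ring
        · refine ⟨insert (Fin.last k) (T₂.map Fin.castSuccEmb), ?_, ?_⟩
          · rw [Finset.card_insert_of_notMem (hlast_notmem T₂), Finset.card_map]
            omega
          · rw [heq, hT₂, hbsum, Finset.sum_insert (hlast_notmem T₂), hsum_map,
              Fin.val_last]
            ring
      · rintro x ⟨T, hTc, rfl⟩
        rw [hrec, hbsum]
        by_cases hl : Fin.last k ∈ T
        · set T' := T.erase (Fin.last k) with hT'
          have hT'l : Fin.last k ∉ T' := Finset.notMem_erase _ _
          set S := T'.preimage Fin.castSucc (Fin.castSucc_injective k).injOn with hS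
          have hmap := map_preimage_castSucc T' hT'l
          have hScard : S.card = T'.card := by
            rw [← hmap, Finset.card_map]
          have hcard : S.card ≤ γ := by
            rw [hScard, hT', Finset.card_erase_of_mem hl]
            omega
          have hsum : ∑ l ∈ T, h (l : ℕ) = (∑ l ∈ S, h (l : ℕ)) + h k := by
            have h1 : h ((Fin.last k : Fin (k+1)) : ℕ) + ∑ l ∈ T', h (l : ℕ)
                = ∑ l ∈ T, h (l : ℕ) := Finset.add_sum_erase T (fun l => h (l:ℕ)) hl
            rw [← h1, ← hmap, hsum_map, Fin.val_last]
            ring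
          have hle : (∑ l : Fin k, b l) + ∑ l ∈ S, h (l : ℕ) ≤ u k γ :=
            hub₂ ⟨S, hcard, rfl⟩
          rw [hsum]
          calc (∑ l : Fin k, b l) + b k + ((∑ l ∈ S, h (l : ℕ)) + h k)
              ≤ u k γ + b k + h k := by linarith
            _ ≤ _ := le_max_right _ _
        · set S := T.preimage Fin.castSucc (Fin.castSucc_injective k).injOn with hS
          have hmap := map_preimage_castSucc T hl
          have hScard : S.card = T.card := by
            rw [← hmap, Finset.card_map]
          have hcard : S.card ≤ γ + 1 := by omega
          have hsum : ∑ l ∈ T, h (l : ℕ) = ∑ l ∈ S, h (l : ℕ) := by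
            rw [← hmap, hsum_map]
          have hle : (∑ l : Fin k, b l) + ∑ l ∈ S, h (l : ℕ) ≤ u k (γ+1) :=
            hub₁ ⟨S, hcard, rfl⟩
          rw [hsum]
          calc (∑ l : Fin k, b l) + b k + ∑ l ∈ S, h (l : ℕ)
              ≤ u k (γ+1) + b k := by linarith
            _ ≤ _ := le_max_left _ _
end

section
/- A route (i_1,...,i_K) satisfies the robust capacity constraint Σ_k d_{i_k} ≤ Q for all d in the budgeted uncertainty set with integer budget Γ if and only if u_{i_K, min(Γ,K)} ≤ Q, where u is the worst-case load computed by the dynamic programming recursion. -/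
/-!
Unrolling the recursion, `u k γ` is the nominal load of the first `k` route nodes plus the
largest total deviation `d̂` over at most `γ` of them; for `γ = min Γ K` this is the load under
an admissible 0/1 vector `ξ`. Conversely, a fractional `ξ ∈ [0,1]^K` with `∑ ξ ≤ min Γ K`
cannot do better than the `min Γ K` largest deviations `S`: for a threshold `t ≥ 0` separating
`S` from the other nodes, `∑ ξₖ d̂ₖ = ∑ ξₖ (d̂ₖ - t) + t ∑ ξₖ ≤ ∑_{k ∈ S} (d̂ₖ - t) + t #S`.
-/

open Finset

namespace Finset

variable {ι : Type*}

noncomputable def maxSubsetSum (c : ι → ℝ) (s : Finset ι) (γ : ℕ) : ℝ :=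
  (s.powerset.filter fun S => #S ≤ γ).sup' ⟨∅, by simp⟩ fun S => ∑ j ∈ S, c j

section maxSubsetSum

variable {c : ι → ℝ} {s S : Finset ι} {γ : ℕ}

theorem sum_le_maxSubsetSum (hS : S ⊆ s) (hγ : #S ≤ γ) :
    ∑ j ∈ S, c j ≤ maxSubsetSum c s γ :=
  le_sup' (fun S => ∑ j ∈ S, c j) (by simp [hS, hγ])

theorem maxSubsetSum_le {x : ℝ} (h : ∀ S ⊆ s, #S ≤ γ → ∑ j ∈ S, c j ≤ x) :
    maxSubsetSum c s γ ≤ x :=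
  sup'_le _ _ fun S hS => by simp only [mem_filter, mem_powerset] at hS; exact h S hS.1 hS.2

theorem exists_sum_eq_maxSubsetSum (c : ι → ℝ) (s : Finset ι) (γ : ℕ) :
    ∃ S ⊆ s, #S ≤ γ ∧ ∑ j ∈ S, c j = maxSubsetSum c s γ := by
  obtain ⟨S, hS, hmax⟩ := exists_mem_eq_sup' (s := s.powerset.filter fun S => #S ≤ γ)
    ⟨∅, by simp⟩ fun S => ∑ j ∈ S, c j
  simp only [mem_filter, mem_powerset] at hS
  exact ⟨S, hS.1, hS.2, hmax.symm⟩

@[simp]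
theorem maxSubsetSum_empty (c : ι → ℝ) (γ : ℕ) : maxSubsetSum c ∅ γ = 0 :=
  le_antisymm (maxSubsetSum_le fun S hS _ => by simp [subset_empty.mp hS])
    (by simpa using sum_le_maxSubsetSum (c := c) (empty_subset ∅) (Nat.zero_le γ))

@[simp]
theorem maxSubsetSum_zero (c : ι → ℝ) (s : Finset ι) : maxSubsetSum c s 0 = 0 :=
  le_antisymm (maxSubsetSum_le fun S _ hS => by simp [card_eq_zero.mp (Nat.le_zero.mp hS)])
    (by simpa using sum_le_maxSubsetSum (c := c) (empty_subset s) le_rfl)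

theorem maxSubsetSum_insert [DecidableEq ι] {a : ι} (ha : a ∉ s) (c : ι → ℝ) (γ : ℕ) :
    maxSubsetSum c (insert a s) (γ + 1) =
      max (maxSubsetSum c s (γ + 1)) (maxSubsetSum c s γ + c a) := by
  apply le_antisymm
  · refine maxSubsetSum_le fun S hS hcard => ?_
    by_cases haS : a ∈ S
    · rw [← sum_erase_add S c haS]
      have hsub : S.erase a ⊆ s := fun j hj => by
        simpa [ne_of_mem_erase hj] using hS (mem_of_mem_erase hj)
      refine le_max_of_le_right (add_le_add_left ?_ _)
      exact sum_le_maxSubsetSum hsub (by rw [card_erase_of_mem haS]; omega)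
    · exact le_max_of_le_left <| sum_le_maxSubsetSum
        (fun j hj => (mem_insert.mp (hS hj)).resolve_left (ne_of_mem_of_not_mem hj haS)) hcard
  · refine max_le (maxSubsetSum_le fun S hS hcard =>
      sum_le_maxSubsetSum (hS.trans (subset_insert a s)) hcard) ?_
    obtain ⟨S, hS, hcard, hsum⟩ := exists_sum_eq_maxSubsetSum c s γ
    have haS : a ∉ S := fun h => ha (hS h)
    rw [← hsum, add_comm, ← sum_insert haS]
    exact sum_le_maxSubsetSum (insert_subset_insert a hS) (by rw [card_insert_of_notMem haS]; omega)

end maxSubsetSum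

theorem exists_subset_card_eq_forall_sdiff_le [DecidableEq ι] (c : ι → ℝ) {s : Finset ι} {m : ℕ}
    (hm : m ≤ #s) :
    ∃ S ⊆ s, #S = m ∧ ∀ a ∈ S, ∀ b ∈ s \ S, c b ≤ c a := by
  obtain ⟨S, hS, hmax⟩ :=
    exists_max_image (s.powersetCard m) (fun S => ∑ j ∈ S, c j) (powersetCard_nonempty.2 hm)
  rw [mem_powersetCard] at hS
  refine ⟨S, hS.1, hS.2, fun a ha b hb => ?_⟩
  obtain ⟨hbs, hbS⟩ := mem_sdiff.mp hb
  have hbS' : b ∉ S.erase a := fun h => hbS (mem_of_mem_erase h)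
  have hcard : #(insert b (S.erase a)) = m := by
    rw [card_insert_of_notMem hbS', card_erase_of_mem ha, ← hS.2]
    have := card_pos.mpr ⟨a, ha⟩
    omega
  have hswap := hmax (insert b (S.erase a)) <| mem_powersetCard.mpr
    ⟨insert_subset hbs ((erase_subset a S).trans hS.1), hcard⟩
  rw [sum_insert hbS', ← sum_erase_add S c ha] at hswap
  linarith

theorem sum_mul_le_sum_of_threshold [DecidableEq ι] {s S : Finset ι} (hS : S ⊆ s) {η c : ι → ℝ}
    {t : ℝ} (ht : 0 ≤ t) (hη : ∀ j ∈ s, η j ∈ Set.Icc (0 : ℝ) 1) (hsum : ∑ j ∈ s, η j ≤ #S)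
    (hcS : ∀ j ∈ S, t ≤ c j) (hcs : ∀ j ∈ s \ S, c j ≤ t) :
    ∑ j ∈ s, η j * c j ≤ ∑ j ∈ S, c j :=
  calc ∑ j ∈ s, η j * c j = ∑ j ∈ s, η j * (c j - t) + t * ∑ j ∈ s, η j := by
        rw [mul_sum, ← sum_add_distrib]; exact sum_congr rfl fun j _ => by ring
    _ = ∑ j ∈ S, η j * (c j - t) + ∑ j ∈ s \ S, η j * (c j - t) + t * ∑ j ∈ s, η j := by
        rw [← sum_sdiff hS (f := fun j => η j * (c j - t)), add_comm (∑ j ∈ s \ S, _)]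
    _ ≤ ∑ j ∈ S, 1 * (c j - t) + ∑ j ∈ s \ S, 0 + t * #S := by
        gcongr with j hj j hj
        · exact sub_nonneg.mpr (hcS j hj)
        · exact (hη j (hS hj)).2
        · exact mul_nonpos_of_nonneg_of_nonpos (hη j (sdiff_subset hj)).1
            (sub_nonpos.mpr (hcs j hj))
    _ = ∑ j ∈ S, c j := by simp [sum_sub_distrib]; ring

theorem sum_mul_le_sum_of_forall_sdiff_le [DecidableEq ι] {s S : Finset ι} (hS : S ⊆ s)
    {η c : ι → ℝ} (hc : ∀ j ∈ s, 0 ≤ c j) (hη : ∀ j ∈ s, η j ∈ Set.Icc (0 : ℝ) 1)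
    (hsum : ∑ j ∈ s, η j ≤ #S) (hexch : ∀ a ∈ S, ∀ b ∈ s \ S, c b ≤ c a) :
    ∑ j ∈ s, η j * c j ≤ ∑ j ∈ S, c j := by
  rcases S.eq_empty_or_nonempty with rfl | hne
  · have hη0 : ∀ j ∈ s, η j = 0 :=
      (sum_eq_zero_iff_of_nonneg fun j hj => (hη j hj).1).mp (le_antisymm (by simpa using hsum)
        (sum_nonneg fun j hj => (hη j hj).1))
    simp [sum_eq_zero fun j hj => show η j * c j = 0 by rw [hη0 j hj, zero_mul]]
  · exact sum_mul_le_sum_of_threshold hS (S.le_inf' hne c fun a ha => hc a (hS ha)) hη hsum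
      (fun j hj => S.inf'_le c hj) fun j hj => S.le_inf' hne c fun a ha => hexch a ha j hj

theorem sum_mul_le_maxSubsetSum [DecidableEq ι] {s : Finset ι} {η c : ι → ℝ}
    (hc : ∀ j ∈ s, 0 ≤ c j) (hη : ∀ j ∈ s, η j ∈ Set.Icc (0 : ℝ) 1) {γ : ℕ}
    (hsum : ∑ j ∈ s, η j ≤ γ) : ∑ j ∈ s, η j * c j ≤ maxSubsetSum c s (min γ #s) := by
  obtain ⟨S, hS, hcard, hexch⟩ := exists_subset_card_eq_forall_sdiff_le c (min_le_right γ #s)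
  have hsumS : ∑ j ∈ s, η j ≤ #S := by
    have hle_card : ∑ j ∈ s, η j ≤ #s := by
      simpa using sum_le_card_nsmul s η 1 fun j hj => (hη j hj).2
    rw [hcard, Nat.cast_min]
    exact le_min hsum hle_card
  exact (sum_mul_le_sum_of_forall_sdiff_le hS hc hη hsumS hexch).trans
    (sum_le_maxSubsetSum hS hcard.le)

end Finset

theorem dp_eq_sum_add_maxSubsetSum {K : ℕ} (b c : Fin K → ℝ) (u : ℕ → ℕ → ℝ)
    (h0 : ∀ γ, u 0 γ = 0) (hrec0 : ∀ k : Fin K, u ((k : ℕ) + 1) 0 = u (k : ℕ) 0 + b k)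
    (hrec : ∀ (k : Fin K) (γ : ℕ), u ((k : ℕ) + 1) (γ + 1) =
      max (u (k : ℕ) (γ + 1) + b k) (u (k : ℕ) γ + b k + c k)) (Γ : ℕ) :
    u K Γ = ∑ k, b k + maxSubsetSum c univ Γ := by
  suffices h : ∀ k ≤ K, ∀ γ, u k γ = ∑ j ∈ univ.filter (fun j : Fin K => j < k), b j +
      maxSubsetSum c (univ.filter fun j : Fin K => j < k) γ by
    simpa using h K le_rfl Γ
  intro k hk
  induction k with
  | zero => simp [h0]
  | succ k ih =>
    have hins : univ.filter (fun j : Fin K => j < k + 1) =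
        insert ⟨k, hk⟩ (univ.filter fun j : Fin K => j < k) := by
      ext j; simp [Fin.ext_iff]; omega
    have hnotin : (⟨k, hk⟩ : Fin K) ∉ univ.filter fun j : Fin K => j < k := by simp
    rintro (_ | γ)
    · rw [hrec0 ⟨k, hk⟩, ih (by omega), hins, sum_insert hnotin, maxSubsetSum_zero,
        maxSubsetSum_zero]
      ring
    · rw [hrec ⟨k, hk⟩, ih (by omega), ih (by omega), hins, sum_insert hnotin,
        maxSubsetSum_insert hnotin, ← max_add_add_left]
      ring_nf

theorem Fintype.sum_comp_le_sum_of_injective {ι κ : Type*} [Fintype ι] [Fintype κ] {r : κ → ι}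
    (hr : Function.Injective r) {ξ : ι → ℝ} (hξ : ∀ i, 0 ≤ ξ i) : ∑ k, ξ (r k) ≤ ∑ i, ξ i := by
  classical
  rw [← sum_image fun k _ l _ h => hr h]
  exact sum_le_univ_sum_of_nonneg hξ

theorem exists_unitInterval_sum_eq_card_comp_eq_ite {ι κ : Type*} [Fintype ι] [DecidableEq ι]
    [DecidableEq κ] {r : κ → ι} (hr : Function.Injective r) (S : Finset κ) :
    ∃ ξ : ι → ℝ, (∀ i, ξ i ∈ Set.Icc (0 : ℝ) 1) ∧ ∑ i, ξ i = #S ∧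
      ∀ k, ξ (r k) = if k ∈ S then 1 else 0 := by
  refine ⟨fun i => if i ∈ S.image r then 1 else 0, fun i => ?_, ?_, fun k => ?_⟩
  · dsimp only; split_ifs <;> norm_num
  · simp only [sum_boole, filter_mem_eq_inter, univ_inter, card_image_of_injective S hr]
  · simp only [hr.mem_finset_image]

theorem robust_feasibility_iff_dp (n : ℕ) (db dh : Fin n → ℝ)
    (hdh : ∀ i, 0 ≤ dh i) (Γ : ℕ) (Q : ℝ)
    (D : Set (Fin n → ℝ))
    (hD : D = {d | ∃ ξ : Fin n → ℝ, (∀ i, ξ i ∈ Set.Icc (0:ℝ) 1) ∧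
        (∑ i, ξ i ≤ (Γ : ℝ)) ∧ ∀ i, d i = db i + ξ i * dh i})
    (K : ℕ) (r : Fin K → Fin n) (hr : Function.Injective r)
    (u : ℕ → ℕ → ℝ)
    (h0 : ∀ γ, u 0 γ = 0)
    (hrec0 : ∀ k : Fin K, u ((k : ℕ) + 1) 0 = u (k : ℕ) 0 + db (r k))
    (hrec : ∀ (k : Fin K) (γ : ℕ), u ((k : ℕ) + 1) (γ + 1) =
      max (u (k : ℕ) (γ + 1) + db (r k)) (u (k : ℕ) γ + db (r k) + dh (r k))) :
    (∀ d ∈ D, ∑ k, d (r k) ≤ Q) ↔ u K (min Γ K) ≤ Q := by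
  subst hD
  have hu : u K (min Γ K) = ∑ k, db (r k) + maxSubsetSum (fun k => dh (r k)) univ (min Γ K) :=
    dp_eq_sum_add_maxSubsetSum _ _ u h0 hrec0 hrec (min Γ K)
  have hload (ξ : Fin n → ℝ) : ∑ k, (db (r k) + ξ (r k) * dh (r k)) =
      ∑ k, db (r k) + ∑ k, ξ (r k) * dh (r k) := sum_add_distrib
  constructor
  · intro hfeas
    obtain ⟨S, -, hS, hSsum⟩ := exists_sum_eq_maxSubsetSum (fun k => dh (r k)) univ (min Γ K)
    obtain ⟨ξ, hξ, hξsum, hξr⟩ := exists_unitInterval_sum_eq_card_comp_eq_ite hr S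
    have hworst : ∑ k, (db (r k) + ξ (r k) * dh (r k)) ≤ Q :=
      hfeas _ ⟨ξ, hξ, hξsum.trans_le (mod_cast hS.trans (min_le_left Γ K)), fun _ => rfl⟩
    rw [hload] at hworst
    simp only [hξr, ite_mul, one_mul, zero_mul, sum_ite_mem, univ_inter] at hworst
    rwa [hu, ← hSsum]
  · rintro hQ d ⟨ξ, hξ, hξsum, hd⟩
    have hdev := sum_mul_le_maxSubsetSum (fun k _ => hdh (r k)) (fun k _ => hξ (r k))
      ((Fintype.sum_comp_le_sum_of_injective hr fun i => (hξ i).1).trans hξsum)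
    rw [card_univ, Fintype.card_fin] at hdev
    calc ∑ k, d (r k) = ∑ k, db (r k) + ∑ k, ξ (r k) * dh (r k) := by simp only [hd, hload]
      _ ≤ u K (min Γ K) := by rw [hu]; gcongr
      _ ≤ Q := hQ
end
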